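/- For every integer k ≥ 2, every integer λ ≥ 1, and every ε ∈ (0,1), there exists a finite pseudometric space (M,d) containing distinct points x_1, …, x_k with d(x_i, x_j) = 1 for all i ≠ j, and a set N of k·λ agent points partitioned into groups g_1, …, g_k each of size λ, such that: (i) for every j ∈ {1,…,k} and every agent i ∈ g_j, d(i, x_j) > d(i, x_l) for every l ≠ j (x_j is the unique farthest alternative for every agent of g_j, so every group-unanimous mechanism must choose x_j as the representative of g_j); and (ii) for every j ∈ {1,…,k−1}, Σ_{i∈N} d(i, x_j) ≥ (2k − 1 − ε) · Σ_{i∈N} d(i, x_k). -/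
import Mathlib

private lemma pi_dist_eq_of {k : ℕ} {x y : Fin k → ℝ} {r : ℝ} (h0 : 0 ≤ r)
    (hle : ∀ c, |x c - y c| ≤ r) (c₀ : Fin k) (he : |x c₀ - y c₀| = r) :
    dist x y = r := by
  refine le_antisymm ((dist_pi_le_iff h0).2 fun c => by rw [Real.dist_eq]; exact hle c) ?_
  calc r = dist (x c₀) (y c₀) := by rw [Real.dist_eq, he]
    _ ≤ dist x y := dist_le_pi_dist x y c₀

/-- The embedding of alternatives and agents into `Fin k → ℝ` with the sup metric. -/
private noncomputable def fpt (k lam : ℕ) (δ : ℝ) (last : Fin k) :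
    Fin k ⊕ Fin k × Fin lam → Fin k → ℝ
  | Sum.inl j => fun c => if c = j then 1 else 0
  | Sum.inr (j, _) =>
      if j = last then (fun c => if c = last then 1/2 - δ else 1/2)
      else fun c => if c = last then 1 else if c = j then -δ else 0

private lemma fpt_inl {k lam : ℕ} (δ : ℝ) (last : Fin k) (l c : Fin k) :
    fpt k lam δ last (Sum.inl l) c = if c = l then 1 else 0 := rfl

private lemma fpt_inr_last {k lam : ℕ} (δ : ℝ) (last : Fin k) {j : Fin k} (hj : j = last)
    (a : Fin lam) (c : Fin k) :
    fpt k lam δ last (Sum.inr (j, a)) c = if c = last then 1/2 - δ else 1/2 := by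
  simp [fpt, hj]

private lemma fpt_inr_nlast {k lam : ℕ} (δ : ℝ) (last : Fin k) {j : Fin k} (hj : ¬ j = last)
    (a : Fin lam) (c : Fin k) :
    fpt k lam δ last (Sum.inr (j, a)) c =
      if c = last then 1 else if c = j then -δ else 0 := by
  simp [fpt, hj]

private lemma fpt_AA {k lam : ℕ} (δ : ℝ) (last : Fin k) {i j : Fin k} (hij : i ≠ j) :
    dist (fpt k lam δ last (Sum.inl i)) (fpt k lam δ last (Sum.inl j)) = 1 := by
  refine pi_dist_eq_of one_pos.le (fun c => ?_) i ?_
  · rw [fpt_inl, fpt_inl]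
    split_ifs <;> norm_num
  · rw [fpt_inl, fpt_inl, if_pos rfl, if_neg hij]
    norm_num

private lemma fpt_D {k lam : ℕ} {δ : ℝ} (hδ0 : 0 < δ) (hδ : δ ≤ 1/2) (last : Fin k)
    (j : Fin k) (a : Fin lam) (l : Fin k) :
    dist (fpt k lam δ last (Sum.inr (j, a))) (fpt k lam δ last (Sum.inl l)) =
      if j = last then (if l = last then 1/2 + δ else 1/2)
      else if l = j then 1 + δ else if l = last then δ else 1 := by
  by_cases hj : j = last
  · by_cases hl : l = last
    · rw [if_pos hj, if_pos hl]
      refine pi_dist_eq_of (by linarith) (fun c => ?_) last ?_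
      · rw [fpt_inr_last δ last hj, fpt_inl]
        split_ifs <;> (rw [abs_le]; constructor <;> linarith)
      · rw [fpt_inr_last δ last hj, fpt_inl, if_pos rfl, if_pos hl.symm,
          abs_of_nonpos (by linarith)]
        ring
    · rw [if_pos hj, if_neg hl]
      refine pi_dist_eq_of (by norm_num) (fun c => ?_) l ?_
      · rw [fpt_inr_last δ last hj, fpt_inl]
        split_ifs <;>
          first
          | (rw [abs_le]; constructor <;> linarith)
          | simp_all
      · rw [fpt_inr_last δ last hj, fpt_inl, if_neg hl, if_pos rfl,
          abs_of_nonpos (by norm_num)]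
        norm_num
  · rw [if_neg hj]
    by_cases hl : l = j
    · rw [if_pos hl]
      refine pi_dist_eq_of (by linarith) (fun c => ?_) j ?_
      · rw [fpt_inr_nlast δ last hj, fpt_inl]
        split_ifs <;>
          first
          | (rw [abs_le]; constructor <;> linarith)
          | simp_all
      · rw [fpt_inr_nlast δ last hj, fpt_inl, if_neg hj, if_pos rfl, if_pos hl.symm,
          abs_of_nonpos (by linarith)]
        ring
    · rw [if_neg hl]
      by_cases hll : l = last
      · rw [if_pos hll]
        refine pi_dist_eq_of hδ0.le (fun c => ?_) j ?_
        · rw [fpt_inr_nlast δ last hj, fpt_inl]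
          split_ifs <;>
            first
            | (rw [abs_le]; constructor <;> linarith)
            | simp_all
        · rw [fpt_inr_nlast δ last hj, fpt_inl, if_neg hj, if_pos rfl,
            if_neg (fun h : j = l => hl h.symm), abs_of_nonpos (by linarith)]
          ring
      · rw [if_neg hll]
        refine pi_dist_eq_of one_pos.le (fun c => ?_) l ?_
        · rw [fpt_inr_nlast δ last hj, fpt_inl]
          split_ifs <;>
            first
            | (rw [abs_le]; constructor <;> linarith)
            | simp_all
        · rw [fpt_inr_nlast δ last hj, fpt_inl, if_neg hll, if_neg hl, if_pos rfl,
            abs_of_nonpos (by norm_num)]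
          norm_num

theorem groupUnanimous_lower_bound_construction
    (k lam : ℕ) (hk : 2 ≤ k) (hlam : 1 ≤ lam)
    (ε : ℝ) (hε : 0 < ε) (hε1 : ε < 1) :
    ∃ d : (Fin k ⊕ Fin k × Fin lam) → (Fin k ⊕ Fin k × Fin lam) → ℝ,
      (∀ p, d p p = 0) ∧
      (∀ p q, 0 ≤ d p q) ∧
      (∀ p q, d p q = d q p) ∧
      (∀ p q s, d p s ≤ d p q + d q s) ∧
      (∀ i j : Fin k, i ≠ j → d (Sum.inl i) (Sum.inl j) = 1) ∧
      (∀ j : Fin k, ∀ a : Fin lam, ∀ l : Fin k, l ≠ j →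
        d (Sum.inr (j, a)) (Sum.inl l) < d (Sum.inr (j, a)) (Sum.inl j)) ∧
      (∀ j : Fin k, (j : ℕ) ≠ k - 1 →
        (2 * (k : ℝ) - 1 - ε) *
            (∑ j' : Fin k, ∑ a : Fin lam, d (Sum.inr (j', a)) (Sum.inl ⟨k - 1, by omega⟩)) ≤
          ∑ j' : Fin k, ∑ a : Fin lam, d (Sum.inr (j', a)) (Sum.inl j)) := by
  classical
  have hk2 : (2 : ℝ) ≤ (k : ℝ) := by exact_mod_cast hk
  set δ : ℝ := ε / (4 * (k : ℝ) ^ 2) with hδdef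
  have hk0 : (0 : ℝ) < (k : ℝ) := by linarith
  have hδ0 : 0 < δ := by positivity
  have hδeq : 4 * (k : ℝ) ^ 2 * δ = ε := by
    rw [hδdef]; field_simp
  have hδh : δ ≤ 1/2 := by nlinarith
  set last : Fin k := ⟨k - 1, by omega⟩ with hlast
  refine ⟨fun p q => dist (fpt k lam δ last p) (fpt k lam δ last q),
    fun p => dist_self _, fun p q => dist_nonneg, fun p q => dist_comm _ _,
    fun p q s => dist_triangle _ _ _, fun i j hij => fpt_AA δ last hij, ?_, ?_⟩
  · intro j a l hl
    show dist (fpt k lam δ last (Sum.inr (j, a))) (fpt k lam δ last (Sum.inl l)) <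
      dist (fpt k lam δ last (Sum.inr (j, a))) (fpt k lam δ last (Sum.inl j))
    rw [fpt_D hδ0 hδh last j a l, fpt_D hδ0 hδh last j a j]
    by_cases hj : j = last
    · rw [if_pos hj, if_pos hj, if_neg (fun h : l = last => hl (h.trans hj.symm)),
        if_pos hj]
      linarith
    · rw [if_neg hj, if_neg hj, if_neg hl, if_pos rfl]
      split_ifs <;> linarith
  · intro j hj
    have hjl : j ≠ last := fun h => hj (by rw [h])
    show (2 * (k : ℝ) - 1 - ε) *
        (∑ j' : Fin k, ∑ a : Fin lam,
          dist (fpt k lam δ last (Sum.inr (j', a))) (fpt k lam δ last (Sum.inl last))) ≤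
      ∑ j' : Fin k, ∑ a : Fin lam,
          dist (fpt k lam δ last (Sum.inr (j', a))) (fpt k lam δ last (Sum.inl j))
    have hWlast :
        (∑ j' : Fin k, ∑ a : Fin lam,
          dist (fpt k lam δ last (Sum.inr (j', a))) (fpt k lam δ last (Sum.inl last))) =
          (lam : ℝ) * ((k : ℝ) * δ + 1/2) := by
      calc (∑ j' : Fin k, ∑ a : Fin lam,
            dist (fpt k lam δ last (Sum.inr (j', a))) (fpt k lam δ last (Sum.inl last)))
          = ∑ j' : Fin k, (lam : ℝ) * (δ + if j' = last then (1/2 : ℝ) else 0) := by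
            refine Finset.sum_congr rfl fun j' _ => ?_
            rw [Finset.sum_congr rfl fun a _ => fpt_D hδ0 hδh last j' a last,
              Finset.sum_const, Finset.card_univ, Fintype.card_fin, nsmul_eq_mul]
            congr 1
            by_cases h : j' = last
            · rw [if_pos h, if_pos rfl, if_pos h]; ring
            · rw [if_neg h, if_neg (fun hh : last = j' => h hh.symm), if_pos rfl,
                if_neg h]
              ring
        _ = (lam : ℝ) * ((k : ℝ) * δ + 1/2) := by
            rw [← Finset.mul_sum, Finset.sum_add_distrib, Finset.sum_const,
              Finset.card_univ, Fintype.card_fin, nsmul_eq_mul,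
              Finset.sum_ite_eq' Finset.univ last fun _ => (1/2 : ℝ),
              if_pos (Finset.mem_univ _)]
            try ring
    have hWj :
        (∑ j' : Fin k, ∑ a : Fin lam,
          dist (fpt k lam δ last (Sum.inr (j', a))) (fpt k lam δ last (Sum.inl j))) =
          (lam : ℝ) * ((k : ℝ) - 1/2 + δ) := by
      calc (∑ j' : Fin k, ∑ a : Fin lam,
            dist (fpt k lam δ last (Sum.inr (j', a))) (fpt k lam δ last (Sum.inl j)))
          = ∑ j' : Fin k, (lam : ℝ) *
              (1 + (if j' = j then δ else 0) - if j' = last then (1/2 : ℝ) else 0) := by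
            refine Finset.sum_congr rfl fun j' _ => ?_
            rw [Finset.sum_congr rfl fun a _ => fpt_D hδ0 hδh last j' a j,
              Finset.sum_const, Finset.card_univ, Fintype.card_fin, nsmul_eq_mul]
            congr 1
            by_cases h : j' = last
            · rw [if_pos h, if_neg hjl, if_pos h,
                if_neg (fun hh : j' = j => hjl (hh ▸ h))]
              ring
            · rw [if_neg h, if_neg h]
              by_cases h2 : j = j'
              · rw [if_pos h2, if_pos h2.symm]; ring
              · rw [if_neg h2, if_neg hjl, if_neg (fun hh : j' = j => h2 hh.symm)]
                ring
        _ = (lam : ℝ) * ((k : ℝ) - 1/2 + δ) := by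
            rw [← Finset.mul_sum, Finset.sum_sub_distrib, Finset.sum_add_distrib,
              Finset.sum_const, Finset.card_univ, Fintype.card_fin, nsmul_eq_mul,
              Finset.sum_ite_eq' Finset.univ j fun _ => δ,
              Finset.sum_ite_eq' Finset.univ last fun _ => (1/2 : ℝ),
              if_pos (Finset.mem_univ _), if_pos (Finset.mem_univ _)]
            ring
    rw [hWlast, hWj]
    have hlam1 : (1 : ℝ) ≤ (lam : ℝ) := by exact_mod_cast hlam
    have key : (2 * (k : ℝ) - 1 - ε) * ((k : ℝ) * δ + 1/2) ≤ (k : ℝ) - 1/2 + δ := by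
      nlinarith [mul_nonneg hk0.le hδ0.le, mul_nonneg hε.le (mul_nonneg hk0.le hδ0.le)]
    calc (2 * (k : ℝ) - 1 - ε) * ((lam : ℝ) * ((k : ℝ) * δ + 1/2))
        = (lam : ℝ) * ((2 * (k : ℝ) - 1 - ε) * ((k : ℝ) * δ + 1/2)) := by ring
      _ ≤ (lam : ℝ) * ((k : ℝ) - 1/2 + δ) :=
          mul_le_mul_of_nonneg_left key (by linarith)
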